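/- Let M be a hyperfinite II₁ factor written as the weak closure of an ascending sequence of subfactors M_n ≅ M_{2^n}(ℂ) with M = M_n ⊗̄ (M_n' ∩ M) for every n, and let N ⊆ M be a von Neumann subalgebra such that no corner of M embeds into N inside M (M ⊀_M N). Then for every n, no corner of the relative commutant M_n' ∩ M embeds into N inside M (M_n' ∩ M ⊀_M N). -/

import Mathlib

/-!
The matrix units `e i j` of `A n ≅ M_{2^n}(ℂ)` identify the corner `e i i M e i i` with
`A n' ∩ M` through the compression `x ↦ ∑ j, e j i * x * e i j`. So if `θ : p P p → q N q`
(with `P = A n' ∩ M`) is intertwined by `v`, pick `i` with `v * e i i ≠ 0`: compressing the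
corner `(e i i * p) M (e i i * p)` into `p P p` and then applying `θ` embeds it into `q N q`,
intertwined by `v * e i i`. That intertwiner need not be a partial isometry, but the partial
isometry `w` of its polar decomposition (extend `|v| η ↦ v η` isometrically to the closure of
the range of `|v|`, and by zero on its orthogonal complement) still intertwines and lies in `M`.
Hence `M ≺_M N`, contradicting the hypothesis.
-/

open scoped ComplexOrder
open Filter

namespace PopaQ

variable {H : Type u} [NormedAddCommGroup H] [InnerProductSpace ℂ H] [CompleteSpace H]

/-- Bounded operators on `H`. -/
abbrev Op (H : Type u) [NormedAddCommGroup H] [InnerProductSpace ℂ H] [CompleteSpace H] :=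
  H →L[ℂ] H

/-- The relative commutant `N' ∩ M` (as sets of operators). -/
def relComm (N M : Set (Op H)) : Set (Op H) :=
  {x | x ∈ M ∧ ∀ y ∈ N, y * x = x * y}

/-- The scalar operators `ℂ 1`. -/
def scalars (H : Type u) [NormedAddCommGroup H] [InnerProductSpace ℂ H] [CompleteSpace H] :
    Set (Op H) :=
  {x | ∃ c : ℂ, x = c • (1 : Op H)}

/-- A (self-adjoint) projection. -/
def IsProjection (p : Op H) : Prop :=
  IsSelfAdjoint p ∧ IsIdempotentElem p

/-- `τ` is a faithful tracial state on `M`. -/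
structure IsTracialState (M : Set (Op H)) (τ : Op H →ₗ[ℂ] ℂ) : Prop where
  map_one : τ 1 = 1
  tracial : ∀ x ∈ M, ∀ y ∈ M, τ (x * y) = τ (y * x)
  pos : ∀ x ∈ M, 0 ≤ τ (star x * x)
  faithful : ∀ x ∈ M, τ (star x * x) = 0 → x = 0

/-- A set of operators is finite dimensional as a complex vector space. -/
def FinDim (S : Set (Op H)) : Prop :=
  ∃ s : Finset (Op H), S ⊆ (Submodule.span ℂ (s : Set (Op H)) : Set (Op H))

/-- `M` is a II₁ factor with faithful normal trace `τ`:
a factor (trivial center) carrying a faithful tracial state, which is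
infinite dimensional. -/
structure IsII1Factor (M : VonNeumannAlgebra H) (τ : Op H →ₗ[ℂ] ℂ) : Prop where
  factor : relComm (M : Set (Op H)) (M : Set (Op H)) = scalars H
  trace : IsTracialState (M : Set (Op H)) τ
  infdim : ¬ FinDim (M : Set (Op H))

/-- `M` is hyperfinite: it is the (weak closure = double commutant) of an increasing
union of finite-dimensional *-subalgebras. -/
def IsHyperfinite (M : VonNeumannAlgebra H) : Prop :=
  ∃ A : ℕ → StarSubalgebra ℂ (Op H),
    Monotone A ∧ (∀ n, (A n : Set (Op H)) ⊆ M) ∧ (∀ n, FinDim (A n : Set (Op H))) ∧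
    Set.centralizer (Set.centralizer (⋃ n, (A n : Set (Op H)))) = (M : Set (Op H))

/-- A bounded sequence of operators. -/
def Bdd (x : ℕ → Op H) : Prop :=
  ∃ C : ℝ, ∀ n, ‖x n‖ ≤ C

/-- A sequence taking values in `S`. -/
def SeqIn (S : Set (Op H)) (x : ℕ → Op H) : Prop :=
  ∀ n, x n ∈ S

/-- A free ultrafilter on ℕ. -/
def IsFreeUltrafilter (ω : Ultrafilter ℕ) : Prop :=
  ∀ s : Set ℕ, s.Finite → s ∉ ω

/-- `Mω` is the tracial ultrapower of `M` along `ω`, with trace `τ`;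
`limω` assigns to each bounded sequence in `M` its class in `Mω` (the diagonal
embedding of `M` into `Mω` being the identity on `M`). -/
structure IsTracialUltrapower (ω : Ultrafilter ℕ) (M Mω : VonNeumannAlgebra H)
    (τ : Op H →ₗ[ℂ] ℂ) (limω : (ℕ → Op H) → Op H) : Prop where
  subset : (M : Set (Op H)) ⊆ (Mω : Set (Op H))
  mem : ∀ x, SeqIn (M : Set (Op H)) x → Bdd x → limω x ∈ Mω
  diag : ∀ m ∈ M, limω (fun _ => m) = m
  map_add : ∀ x y, SeqIn (M : Set (Op H)) x → Bdd x → SeqIn (M : Set (Op H)) y → Bdd y →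
    limω (fun n => x n + y n) = limω x + limω y
  map_mul : ∀ x y, SeqIn (M : Set (Op H)) x → Bdd x → SeqIn (M : Set (Op H)) y → Bdd y →
    limω (fun n => x n * y n) = limω x * limω y
  map_smul : ∀ (c : ℂ) x, SeqIn (M : Set (Op H)) x → Bdd x →
    limω (fun n => c • x n) = c • limω x
  map_star : ∀ x, SeqIn (M : Set (Op H)) x → Bdd x →
    limω (fun n => star (x n)) = star (limω x)
  surj : ∀ z ∈ Mω, ∃ x, SeqIn (M : Set (Op H)) x ∧ Bdd x ∧ limω x = z
  tr : ∀ x, SeqIn (M : Set (Op H)) x → Bdd x →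
    Tendsto (fun n => τ (x n)) (ω : Filter ℕ) (nhds (τ (limω x)))
  eq_zero : ∀ x, SeqIn (M : Set (Op H)) x → Bdd x →
    (limω x = 0 ↔ Tendsto (fun n => ‖τ (star (x n) * x n)‖) (ω : Filter ℕ) (nhds 0))
  traceState : IsTracialState (Mω : Set (Op H)) τ

/-- The ultrapower `N^ω ⊆ M^ω` of a subalgebra `N ⊆ M`: classes of bounded
sequences with entries in `N`. -/
def ultrapowerSet (limω : (ℕ → Op H) → Op H) (N : Set (Op H)) : Set (Op H) :=
  {z | ∃ x, SeqIn N x ∧ Bdd x ∧ limω x = z}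

/-- `θ` is a *-homomorphism from `S` to `T` (as sets of operators). -/
def IsStarHomOn (θ : Op H → Op H) (S T : Set (Op H)) : Prop :=
  (∀ x ∈ S, θ x ∈ T) ∧
  (∀ x ∈ S, ∀ y ∈ S, θ (x + y) = θ x + θ y) ∧
  (∀ x ∈ S, ∀ y ∈ S, θ (x * y) = θ x * θ y) ∧
  (∀ (c : ℂ), ∀ x ∈ S, θ (c • x) = c • θ x) ∧
  (∀ x ∈ S, θ (star x) = star (θ x))

/-- The corner `p S p` of a set of operators. -/
def corner (p : Op H) (S : Set (Op H)) : Set (Op H) :=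
  {x | x ∈ S ∧ p * x * p = x}

/-- Popa's intertwining relation: a corner of `P` embeds into `Q` inside `M`,
written `P ≺_M Q`: there are nonzero projections `p ∈ P`, `q ∈ Q`, a
*-homomorphism `θ : pPp → qQq` and a nonzero partial isometry `v ∈ qMp` with
`θ(x) v = v x` for all `x ∈ pPp`. -/
def CornerEmbeds (P Q M : Set (Op H)) : Prop :=
  ∃ (p q v : Op H) (θ : Op H → Op H),
    p ∈ P ∧ IsProjection p ∧ p ≠ 0 ∧
    q ∈ Q ∧ IsProjection q ∧ q ≠ 0 ∧
    IsStarHomOn θ (corner p P) (corner q Q) ∧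
    v ∈ M ∧ v ≠ 0 ∧ IsProjection (star v * v) ∧ q * v * p = v ∧
    ∀ x ∈ corner p P, θ x * v = v * x

/-- `E` is the (`τ`-preserving) conditional expectation from `M` onto `Q`. -/
structure IsCondExp (τ : Op H →ₗ[ℂ] ℂ) (M Q : Set (Op H)) (E : Op H → Op H) : Prop where
  mem : ∀ x ∈ M, E x ∈ Q
  fix : ∀ q ∈ Q, E q = q
  map_add : ∀ x ∈ M, ∀ y ∈ M, E (x + y) = E x + E y
  map_smul : ∀ (c : ℂ), ∀ x ∈ M, E (c • x) = c • E x
  bimod : ∀ a ∈ Q, ∀ x ∈ M, ∀ b ∈ Q, E (a * x * b) = a * E x * b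
  tr : ∀ x ∈ M, τ (E x) = τ x

/-- `c` is a Pimsner–Popa bound for the inclusion `Q ⊆ M` with conditional
expectation `E`: every positive `x ∈ M` satisfies `x ≤ c E(x)`. -/
def IndexBound (M : Set (Op H)) (E : Op H → Op H) (c : ℝ) : Prop :=
  ∀ x ∈ M, x.IsPositive → (c • E x - x).IsPositive

/-- The inclusion `Q ⊆ M` (with conditional expectation `E`) has finite Jones index. -/
def HasFiniteIndex (M : Set (Op H)) (E : Op H → Op H) : Prop :=
  ∃ c : ℝ, 0 < c ∧ IndexBound M E c

/-- The Jones index `[M : Q]` of an inclusion `Q ⊆ M` with conditional expectation `E`,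
via the Pimsner–Popa characterization as the optimal constant `c` with
`x ≤ c E(x)` for all positive `x ∈ M`. -/
noncomputable def jonesIndex (M : Set (Op H)) (E : Op H → Op H) : ℝ :=
  sInf {c : ℝ | 0 < c ∧ IndexBound M E c}

open scoped InnerProductSpace

open ContinuousLinearMap in
lemma norm_abs_apply (v : Op H) (η : H) : ‖CFC.abs v η‖ = ‖v η‖ := by
  rw [apply_norm_eq_sqrt_inner_adjoint_left, apply_norm_eq_sqrt_inner_adjoint_left,
    ← star_eq_adjoint, (CFC.abs_nonneg v).isSelfAdjoint.star_eq, ← star_eq_adjoint,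
    ← mul_def, ← mul_def, CFC.abs_mul_abs]

lemma denseRange_codRestrict_topologicalClosure {R E F : Type*} [Semiring R] [AddCommMonoid E]
    [Module R E] [TopologicalSpace F] [AddCommMonoid F] [Module R F] [ContinuousAdd F]
    [ContinuousConstSMul R F] (f : E →ₗ[R] F) :
    DenseRange (f.codRestrict (LinearMap.range f).topologicalClosure
      fun x => Submodule.le_topologicalClosure _ (LinearMap.mem_range_self f x)) := by
  rw [DenseRange, Subtype.dense_iff, ← Set.range_comp]
  exact subset_rfl

lemma exists_partialIsometry_mul_eq (v a : Op H) (h : ∀ η, ‖a η‖ = ‖v η‖) :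
    ∃ w : Op H, w * a = v ∧ (∀ ξ ∈ (LinearMap.range (a : H →ₗ[ℂ] H))ᗮ, w ξ = 0) ∧
      IsProjection (star w * w) := by
  set K := (LinearMap.range (a : H →ₗ[ℂ] H)).topologicalClosure
  set e : H →ₗ[ℂ] K := (a : H →ₗ[ℂ] H).codRestrict K
    fun η => Submodule.le_topologicalClosure _ (LinearMap.mem_range_self _ η)
  have he : DenseRange e := denseRange_codRestrict_topologicalClosure _
  have hbound : ∃ C, ∀ η, ‖(v : H →ₗ[ℂ] H) η‖ ≤ C * ‖e η‖ := ⟨1, fun η => by simp [e, h]⟩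
  set w₀ : K →L[ℂ] H := (v : H →ₗ[ℂ] H).extendOfNorm e
  have hw₀ : ∀ η, w₀ (e η) = v η := LinearMap.extendOfNorm_eq he hbound
  let W : K →ₗᵢ[ℂ] H :=
    { toLinearMap := w₀.toLinearMap
      norm_map' := fun k => he.induction_on k (isClosed_eq (by fun_prop) continuous_norm)
        fun η => by simp [hw₀, e, h] }
  refine ⟨w₀ ∘L K.orthogonalProjectionOnto, ?_, fun ξ hξ => ?_, ?_⟩
  · ext η
    have : K.orthogonalProjectionOnto (a η) = e η :=
      K.orthogonalProjectionOnto_mem_subspace_eq_self (e η)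
    simp [this, hw₀]
  · have hPξ : K.orthogonalProjectionOnto ξ = 0 := by
      rwa [Submodule.orthogonalProjectionOnto_eq_zero_iff, Submodule.orthogonal_closure]
    simp [hPξ]
  · suffices star (w₀ ∘L K.orthogonalProjectionOnto) * (w₀ ∘L K.orthogonalProjectionOnto) =
        K.starProjection by
      rw [this]
      exact ⟨isSelfAdjoint_starProjection K, K.isIdempotentElem_starProjection⟩
    ext ξ
    refine ext_inner_right ℂ fun ζ => ?_
    rw [mul_apply_eq_comp, ContinuousLinearMap.star_eq_adjoint,
      ContinuousLinearMap.adjoint_inner_left]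
    change ⟪W _, W _⟫_ℂ = _
    rw [W.inner_map_map]
    exact Submodule.inner_orthogonalProjectionOnto_eq_of_mem_left _ _

lemma eq_zero_of_forall_mem_of_forall_mem_orthogonal {F : Type*} [NormedAddCommGroup F]
    [NormedSpace ℂ F] (T : H →L[ℂ] F) (S : Submodule ℂ H) (h : ∀ ξ ∈ S, T ξ = 0)
    (h' : ∀ ξ ∈ Sᗮ, T ξ = 0) : T = 0 := by
  have hS : S.topologicalClosure ≤ LinearMap.ker (T : H →ₗ[ℂ] F) :=
    Submodule.topologicalClosure_minimal _ (fun ξ hξ => h ξ hξ) T.isClosed_ker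
  have hS' : S.topologicalClosureᗮ ≤ LinearMap.ker (T : H →ₗ[ℂ] F) := by
    rw [Submodule.orthogonal_closure]
    exact h'
  ext ξ
  have hξ : ξ ∈ S.topologicalClosure ⊔ S.topologicalClosureᗮ := by
    rw [Submodule.sup_orthogonal_of_hasOrthogonalProjection]
    exact Submodule.mem_top
  exact sup_le hS hS' hξ

theorem exists_partialIsometry_intertwining (v : Op H) (hv : v ≠ 0) :
    ∃ w : Op H, w ≠ 0 ∧ IsProjection (star w * w) ∧
      ∀ x y : Op H, Commute x (star v * v) → y * v = v * x → y * w = w * x := by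
  set a := CFC.abs v
  obtain ⟨w, hwa, hw_orth, hw⟩ := exists_partialIsometry_mul_eq v a (norm_abs_apply v)
  refine ⟨w, by rintro rfl; exact hv (by simpa using hwa.symm), hw, fun x y hx hyx => ?_⟩
  have hax : Commute a x := hx.symm.cfcₙ_nnreal _
  have h_orth : (LinearMap.range (a : H →ₗ[ℂ] H))ᗮ = LinearMap.ker (a : H →ₗ[ℂ] H) := by
    rw [ContinuousLinearMap.orthogonal_range, ← ContinuousLinearMap.star_eq_adjoint,
      (CFC.abs_nonneg v).isSelfAdjoint.star_eq]
  rw [← sub_eq_zero]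
  refine eq_zero_of_forall_mem_of_forall_mem_orthogonal _ (LinearMap.range (a : H →ₗ[ℂ] H))
    ?_ fun ξ hξ => ?_
  · rintro _ ⟨η, rfl⟩
    have : (y * w - w * x) * a = 0 := by
      rw [sub_mul, mul_assoc, hwa, mul_assoc, ← hax.eq, ← mul_assoc, hwa, hyx, sub_self]
    exact DFunLike.congr_fun this η
  · have hxξ : x ξ ∈ (LinearMap.range (a : H →ₗ[ℂ] H))ᗮ := by
      rw [h_orth] at hξ ⊢
      change (a * x) ξ = 0
      rw [hax.eq]
      simp_all
    simp [hw_orth ξ hξ, hw_orth _ hxξ]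

section MatrixUnits

variable {ι : Type*} [Fintype ι] {R : Type*} [Semiring R]

def compress (e : ι → ι → R) (i : ι) (x : R) : R :=
  ∑ j, e j i * x * e i j

variable {e : ι → ι → R}

lemma compress_add (i : ι) (x y : R) :
    compress e i (x + y) = compress e i x + compress e i y := by
  simp only [compress, mul_add, add_mul, Finset.sum_add_distrib]

lemma compress_smul {𝕜 : Type*} [Monoid 𝕜] [DistribMulAction 𝕜 R] [IsScalarTower 𝕜 R R]
    [SMulCommClass 𝕜 R R] (c : 𝕜) (i : ι) (x : R) :
    compress e i (c • x) = c • compress e i x := by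
  simp only [compress, mul_smul_comm, smul_mul_assoc, Finset.smul_sum]

lemma mul_compress_mul_of_commute {p : R} (hp : ∀ a b, Commute p (e a b)) (i : ι) (x : R) :
    p * compress e i x * p = compress e i (p * x * p) := by
  simp only [compress, Finset.mul_sum, Finset.sum_mul]
  refine Finset.sum_congr rfl fun j _ => ?_
  simp only [mul_assoc]
  rw [← (hp i j).eq, ← mul_assoc p (e j i), (hp j i).eq, mul_assoc]

lemma compress_mem {S : Type*} [SetLike S R] [MulMemClass S R] [AddSubmonoidClass S R] {M : S}
    (heM : ∀ i j, e i j ∈ M) (i : ι) {x : R} (hx : x ∈ M) : compress e i x ∈ M :=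
  sum_mem fun j _ => mul_mem (mul_mem (heM j i) hx) (heM i j)

variable [DecidableEq ι] [StarRing R]

structure IsMatrixUnits (e : ι → ι → R) : Prop where
  mul_eq : ∀ a b c d, e a b * e c d = if b = c then e a d else 0
  star_eq : ∀ i j, star (e i j) = e j i
  sum_diag : ∑ i, e i i = 1

namespace IsMatrixUnits

lemma mul_compress (he : IsMatrixUnits e) (a b i : ι) (x : R) :
    e a b * compress e i x = e a i * x * e i b := by
  rw [compress, Finset.mul_sum, Finset.sum_eq_single b]
  · rw [← mul_assoc, ← mul_assoc, he.mul_eq, if_pos rfl]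
  · intro j _ hj
    rw [← mul_assoc, ← mul_assoc, he.mul_eq, if_neg (Ne.symm hj), zero_mul, zero_mul]
  · exact fun hb => absurd (Finset.mem_univ b) hb

lemma compress_mul (he : IsMatrixUnits e) (a b i : ι) (x : R) :
    compress e i x * e a b = e a i * x * e i b := by
  rw [compress, Finset.sum_mul, Finset.sum_eq_single a]
  · rw [mul_assoc, he.mul_eq, if_pos rfl]
  · intro j _ hj
    rw [mul_assoc, he.mul_eq, if_neg hj, mul_zero]
  · exact fun ha => absurd (Finset.mem_univ a) ha

lemma commute_compress (he : IsMatrixUnits e) (a b i : ι) (x : R) :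
    Commute (e a b) (compress e i x) :=
  (he.mul_compress a b i x).trans (he.compress_mul a b i x).symm

lemma compress_star (he : IsMatrixUnits e) (i : ι) (x : R) :
    compress e i (star x) = star (compress e i x) := by
  simp only [compress, star_sum, star_mul, he.star_eq, mul_assoc]

lemma compress_mul_of_mul_eq (he : IsMatrixUnits e) {i : ι} {x : R} (hx : x * e i i = x)
    (y : R) : compress e i (x * y) = compress e i x * compress e i y := by
  change ∑ j, e j i * (x * y) * e i j = compress e i x * ∑ j, e j i * y * e i j
  rw [Finset.mul_sum]
  refine Finset.sum_congr rfl fun j _ => ?_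
  calc e j i * (x * y) * e i j = e j i * (x * e i i) * y * e i j := by
        rw [hx]; simp only [mul_assoc]
    _ = compress e i x * e j i * y * e i j := by rw [he.compress_mul]; simp only [mul_assoc]
    _ = compress e i x * (e j i * y * e i j) := by simp only [mul_assoc]

lemma isStarProjection_diag (he : IsMatrixUnits e) (i : ι) : IsStarProjection (e i i) :=
  ⟨by rw [IsIdempotentElem, he.mul_eq, if_pos rfl], he.star_eq i i⟩

end IsMatrixUnits

variable {𝕜 : Type*} [CommSemiring 𝕜] [StarRing 𝕜] [Algebra 𝕜 R]

lemma isMatrixUnits_starAlgHom (f : Matrix ι ι 𝕜 →⋆ₐ[𝕜] R) :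
    IsMatrixUnits fun i j => f (Matrix.single i j 1) where
  mul_eq a b c d := by
    rw [← map_mul]
    split_ifs with h
    · rw [h, Matrix.single_mul_single_same, mul_one]
    · rw [Matrix.single_mul_single_of_ne (h := h), map_zero]
  star_eq i j := by
    rw [← map_star, Matrix.star_eq_conjTranspose, Matrix.conjTranspose_single, star_one]
  sum_diag := by rw [← map_sum, Matrix.sum_single_one, map_one]

end MatrixUnits

lemma commute_apply_of_forall_commute_single {ι 𝕜 R : Type*} [Fintype ι] [DecidableEq ι]
    [CommSemiring 𝕜] [Semiring R] [Algebra 𝕜 R] (f : Matrix ι ι 𝕜 →ₐ[𝕜] R) {z : R}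
    (hz : ∀ i j, Commute (f (Matrix.single i j 1)) z) (m : Matrix ι ι 𝕜) : Commute (f m) z := by
  rw [Matrix.matrix_eq_sum_single m]
  simp only [map_sum]
  refine Commute.sum_left _ _ _ fun i _ => Commute.sum_left _ _ _ fun j _ => ?_
  rw [← mul_one (m i j), ← smul_eq_mul, ← Matrix.smul_single, map_smul]
  exact (hz i j).smul_left _

lemma exists_isMatrixUnits {ι 𝕜 R : Type*} [Fintype ι] [DecidableEq ι] [CommSemiring 𝕜]
    [StarRing 𝕜] [Semiring R] [StarRing R] [Algebra 𝕜 R] [StarModule 𝕜 R]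
    (A : StarSubalgebra 𝕜 R) (ψ : A ≃⋆ₐ[𝕜] Matrix ι ι 𝕜) :
    ∃ e : ι → ι → R, IsMatrixUnits e ∧ (∀ i j, e i j ∈ A) ∧
      ∀ z, (∀ i j, Commute (e i j) z) → ∀ y ∈ A, y * z = z * y := by
  let f : Matrix ι ι 𝕜 →⋆ₐ[𝕜] R := A.subtype.comp (ψ.symm : Matrix ι ι 𝕜 →⋆ₐ[𝕜] A)
  refine ⟨fun i j => f (Matrix.single i j 1), isMatrixUnits_starAlgHom f, fun i j => (ψ.symm _).2,
    fun z hz y hy => ?_⟩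
  exact (show Commute y z by
    simpa [f] using commute_apply_of_forall_commute_single f.toAlgHom hz (ψ ⟨y, hy⟩)).eq

lemma IsStarHomOn.comp {θ φ : Op H → Op H} {S T U : Set (Op H)} (hθ : IsStarHomOn θ T U)
    (hφ : IsStarHomOn φ S T) : IsStarHomOn (θ ∘ φ) S U := by
  obtain ⟨hθU, hθadd, hθmul, hθsmul, hθstar⟩ := hθ
  obtain ⟨hφT, hφadd, hφmul, hφsmul, hφstar⟩ := hφ
  refine ⟨fun x hx => hθU _ (hφT x hx), fun x hx y hy => ?_, fun x hx y hy => ?_,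
    fun c x hx => ?_, fun x hx => ?_⟩
  · simp only [Function.comp_apply, hφadd x hx y hy, hθadd _ (hφT x hx) _ (hφT y hy)]
  · simp only [Function.comp_apply, hφmul x hx y hy, hθmul _ (hφT x hx) _ (hφT y hy)]
  · simp only [Function.comp_apply, hφsmul c x hx, hθsmul c _ (hφT x hx)]
  · simp only [Function.comp_apply, hφstar x hx, hθstar _ (hφT x hx)]

lemma mul_left_eq_of_mem_corner {p x : Op H} {S : Set (Op H)} (hp : IsIdempotentElem p)
    (hx : x ∈ corner p S) : p * x = x := by
  rw [← hx.2, ← mul_assoc, ← mul_assoc, hp.eq]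

lemma mul_right_eq_of_mem_corner {p x : Op H} {S : Set (Op H)} (hp : IsIdempotentElem p)
    (hx : x ∈ corner p S) : x * p = x := by
  rw [← hx.2, mul_assoc, hp.eq]

lemma corner_subset_corner {p r : Op H} {S : Set (Op H)} (hrp : r * p = p) (hpr : p * r = p) :
    corner p S ⊆ corner r S := fun x ⟨hxS, hx⟩ =>
  ⟨hxS, by rw [← hx, ← mul_assoc, ← mul_assoc, hrp, mul_assoc, hpr]⟩

lemma corner_mul_subset {a b : Op H} {S : Set (Op H)} (ha : IsIdempotentElem a)
    (hb : IsIdempotentElem b) (hab : Commute a b) :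
    corner (a * b) S ⊆ corner a S ∩ corner b S := fun _ hx =>
  ⟨corner_subset_corner (by rw [← mul_assoc, ha.eq])
      (by rw [mul_assoc, ← hab.eq, ← mul_assoc, ha.eq]) hx,
    corner_subset_corner (by rw [← mul_assoc, ← hab.eq, mul_assoc, hb.eq])
      (by rw [mul_assoc, hb.eq]) hx⟩

lemma star_mem_corner {P : Set (Op H)} (hP : ∀ x ∈ P, star x ∈ P) {p x : Op H}
    (hp : IsSelfAdjoint p) (hx : x ∈ corner p P) : star x ∈ corner p P :=
  ⟨hP x hx.1, by rw [← hp.star_eq, ← star_mul, ← star_mul, ← mul_assoc, hx.2]⟩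

lemma commute_star_mul_self_of_intertwines {S : Set (Op H)} {θ : Op H → Op H} {v : Op H}
    (hS : ∀ x ∈ S, star x ∈ S) (hθ : ∀ x ∈ S, θ (star x) = star (θ x))
    (hint : ∀ x ∈ S, θ x * v = v * x) (x : Op H) (hx : x ∈ S) : Commute x (star v * v) :=
  calc x * (star v * v) = star (v * star x) * v := by rw [star_mul, star_star, mul_assoc]
    _ = star v * (θ x * v) := by
      rw [← hint _ (hS x hx), star_mul, hθ x hx, star_star, mul_assoc]
    _ = star v * v * x := by rw [hint x hx, mul_assoc]

lemma mul_eq_self_of_mul_mul_eq_self {p q v : Op H} (hp : IsIdempotentElem p)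
    (hq : IsIdempotentElem q) (hqvp : q * v * p = v) : q * v = v ∧ v * p = v :=
  ⟨by rw [← hqvp, ← mul_assoc, ← mul_assoc, hq.eq], by rw [← hqvp, mul_assoc, hp.eq]⟩

theorem cornerEmbeds_of_intertwiner {P Q : Set (Op H)} (M : VonNeumannAlgebra H)
    (hP : ∀ x ∈ P, star x ∈ P) {p q v : Op H} {θ : Op H → Op H}
    (hpP : p ∈ P) (hp : IsProjection p) (hqQ : q ∈ Q) (hq : IsProjection q)
    (hθ : IsStarHomOn θ (corner p P) (corner q Q)) (hvM : v ∈ M) (hv : v ≠ 0)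
    (hqvp : q * v * p = v) (hint : ∀ x ∈ corner p P, θ x * v = v * x) :
    CornerEmbeds P Q M := by
  have hcomm := commute_star_mul_self_of_intertwines
    (fun x hx => star_mem_corner hP hp.1 hx) hθ.2.2.2.2 hint
  obtain ⟨hqv, hvp⟩ := mul_eq_self_of_mul_mul_eq_self hp.2 hq.2 hqvp
  obtain ⟨w, hw0, hw, hwint⟩ := exists_partialIsometry_intertwining v hv
  have hpc : p ∈ corner p P := ⟨hpP, by rw [hp.2.eq, hp.2.eq]⟩
  have hwp : w * p = w := by
    simpa using (hwint p 1 (hcomm p hpc) (by rw [one_mul, hvp])).symm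
  have hqw : q * w = w := by
    simpa using hwint 1 q (Commute.one_left _) (by rw [mul_one, hqv])
  have hwM : w ∈ M := by
    rw [← SetLike.mem_coe, ← M.centralizer_centralizer]
    intro T hT
    exact hwint T T (hT _ (mul_mem (star_mem hvM) hvM)).symm (hT v hvM).symm
  refine ⟨p, q, w, θ, hpP, hp, ?_, hqQ, hq, ?_, hθ, hwM, hw0, hw, by rw [hqw, hwp],
    fun x hx => hwint x (θ x) (hcomm x hx) (hint x hx)⟩
  · rintro rfl
    exact hv (by simpa using hqvp.symm)
  · rintro rfl
    exact hv (by simpa using hqvp.symm)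

section Compression

variable {ι : Type*} [Fintype ι] [DecidableEq ι] {e : ι → ι → Op H}

theorem IsMatrixUnits.isStarHomOn_compress (he : IsMatrixUnits e) {M : VonNeumannAlgebra H}
    {A : Set (Op H)} (heA : ∀ i j, e i j ∈ A) (heM : ∀ i j, e i j ∈ M)
    (hA : ∀ z, (∀ i j, Commute (e i j) z) → ∀ y ∈ A, y * z = z * y)
    {p : Op H} (hpA : p ∈ relComm A M) (hp : IsIdempotentElem p) (i : ι) :
    IsStarHomOn (compress e i) (corner (e i i * p) M) (corner p (relComm A M)) := by
  have hpe : ∀ a b, Commute p (e a b) := fun a b => (hpA.2 _ (heA a b)).symm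
  have hei := (he.isStarProjection_diag i).isIdempotentElem
  have hcorner := corner_mul_subset (S := M) hei hp (hpe i i).symm
  refine ⟨fun x hx => ⟨⟨compress_mem heM i hx.1, hA _ fun a b => he.commute_compress a b i x⟩, ?_⟩,
    fun x _ y _ => compress_add i x y,
    fun x hx y _ => he.compress_mul_of_mul_eq
      (mul_right_eq_of_mem_corner hei (hcorner hx).1) y,
    fun c x _ => compress_smul c i x, fun x _ => he.compress_star i x⟩
  rw [mul_compress_mul_of_commute hpe, (hcorner hx).2.2]

theorem cornerEmbeds_of_cornerEmbeds_relComm {Q A : Set (Op H)} (M : VonNeumannAlgebra H)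
    (he : IsMatrixUnits e) (heA : ∀ i j, e i j ∈ A) (heM : ∀ i j, e i j ∈ M)
    (hA : ∀ z, (∀ i j, Commute (e i j) z) → ∀ y ∈ A, y * z = z * y)
    (h : CornerEmbeds (relComm A M) Q M) : CornerEmbeds M Q M := by
  obtain ⟨p, q, v, θ, hpA, hp, -, hqQ, hq, -, hθ, hvM, hv, -, hqvp, hint⟩ := h
  have hvp : v * p = v := (mul_eq_self_of_mul_mul_eq_self hp.2 hq.2 hqvp).2
  obtain ⟨i, hi⟩ : ∃ i, v * e i i ≠ 0 := by
    by_contra! h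
    refine hv ?_
    rw [← mul_one v, ← he.sum_diag, Finset.mul_sum]
    exact Finset.sum_eq_zero fun i _ => h i
  have hei := he.isStarProjection_diag i
  have hep : Commute (e i i) p := hpA.2 _ (heA i i)
  have hep' : IsStarProjection (e i i * p) := hei.mul ⟨hp.2, hp.1⟩ hep
  have hφ := he.isStarHomOn_compress heA heM hA hpA hp.2 i
  refine cornerEmbeds_of_intertwiner M (fun x hx => star_mem hx) (mul_mem (heM i i) hpA.1)
    ⟨hep'.isSelfAdjoint, hep'.isIdempotentElem⟩ hqQ hq
    (hθ.comp hφ) (mul_mem hvM (heM i i)) hi ?_ fun x hx => ?_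
  · calc q * (v * e i i) * (e i i * p) = q * v * (e i i * e i i * p) := by noncomm_ring
      _ = q * v * p * e i i := by rw [hei.isIdempotentElem.eq, hep.eq, ← mul_assoc]
      _ = v * e i i := by rw [hqvp]
  · have hx' := corner_mul_subset hei.isIdempotentElem hp.2 hep hx
    calc (θ ∘ compress e i) x * (v * e i i) = v * (compress e i x * e i i) := by
          rw [Function.comp_apply, ← mul_assoc, hint _ (hφ.1 x hx), mul_assoc]
      _ = v * e i i * x := by
          rw [he.compress_mul, hx'.1.2, mul_assoc,
            mul_left_eq_of_mem_corner hei.isIdempotentElem hx'.1]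

end Compression

theorem relComm_matrix_no_embed_general
    {H : Type u} [NormedAddCommGroup H] [InnerProductSpace ℂ H] [CompleteSpace H]
    (M N : VonNeumannAlgebra H)
    (A : ℕ → StarSubalgebra ℂ (Op H))
    (hAM : ∀ n, (A n : Set (Op H)) ⊆ (M : Set (Op H)))
    (hmatrix : ∀ n, Nonempty ((A n) ≃⋆ₐ[ℂ] Matrix (Fin (2 ^ n)) (Fin (2 ^ n)) ℂ))
    (hno : ¬ CornerEmbeds (M : Set (Op H)) (N : Set (Op H)) (M : Set (Op H))) :
    ∀ n, ¬ CornerEmbeds (relComm (A n : Set (Op H)) (M : Set (Op H)))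
      (N : Set (Op H)) (M : Set (Op H)) := by
  intro n h
  obtain ⟨e, he, heA, hA⟩ := exists_isMatrixUnits (A n) (hmatrix n).some
  exact hno (cornerEmbeds_of_cornerEmbeds_relComm M he heA (fun i j => hAM n (heA i j)) hA h)

/-- Let `M` be a hyperfinite II₁ factor, the weak closure of an
ascending sequence of subfactors `M n ≅ M_{2^n}(ℂ)` with `M = M_n ⊗̄ (M_n' ∩ M)` for
every `n` (generation plus factorization of the trace), and let `N ⊆ M` be a von
Neumann subalgebra with `M ⊀_M N`. Then `M_n' ∩ M ⊀_M N` for every `n`. -/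
theorem relComm_matrix_no_embed
    {H : Type u} [NormedAddCommGroup H] [InnerProductSpace ℂ H] [CompleteSpace H]
    (M N : VonNeumannAlgebra H) (τ : Op H →ₗ[ℂ] ℂ)
    (A : ℕ → StarSubalgebra ℂ (Op H))
    (hM : IsII1Factor M τ)
    (hmono : Monotone A)
    (hAM : ∀ n, (A n : Set (Op H)) ⊆ (M : Set (Op H)))
    (hmatrix : ∀ n, Nonempty ((A n) ≃⋆ₐ[ℂ] Matrix (Fin (2 ^ n)) (Fin (2 ^ n)) ℂ))
    (hdense : Set.centralizer (Set.centralizer (⋃ n, (A n : Set (Op H)))) =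
      (M : Set (Op H)))
    (htensor : ∀ n, Set.centralizer (Set.centralizer
      ((A n : Set (Op H)) ∪ relComm (A n : Set (Op H)) (M : Set (Op H)))) =
        (M : Set (Op H)))
    (htrace : ∀ n, ∀ a ∈ (A n : Set (Op H)),
      ∀ b ∈ relComm (A n : Set (Op H)) (M : Set (Op H)), τ (a * b) = τ a * τ b)
    (hNM : (N : Set (Op H)) ⊆ (M : Set (Op H)))
    (hno : ¬ CornerEmbeds (M : Set (Op H)) (N : Set (Op H)) (M : Set (Op H))) :
    ∀ n, ¬ CornerEmbeds (relComm (A n : Set (Op H)) (M : Set (Op H)))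
      (N : Set (Op H)) (M : Set (Op H)) :=
  relComm_matrix_no_embed_general M N A hAM hmatrix hno

end PopaQ
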